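/- arXiv:2103.09577 — 2 statements merged into one kernel-verified Lean document; each statement's English description precedes it below -/
import Mathlib

section
/- For every integer N ≥ 2 and every real 0 < φ ≤ π, there exists a finite set P of unit vectors in ℝ^N that is φ-dense (every unit vector in ℝ^N is at geodesic distance at most φ from some element of P) and whose cardinality satisfies |P| ≤ √(2πN) · (1/sin(φ/2))^(N−1). -/
open Real

/-- Geodesic (great-circle) distance between unit vectors in `ℝ^N`:
the angle `arccos ⟨u, v⟩ ∈ [0, π]`. -/
noncomputable def geodesicDist {N : ℕ} (u v : EuclideanSpace ℝ (Fin N)) : ℝ :=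
  Real.arccos (inner ℝ u v : ℝ)

/-!
A maximal family of unit vectors with pairwise chordal distance `> 2 sin (φ / 2)`, i.e. pairwise
angle `> φ`, is `φ`-dense. To count it, put around each of its points `p` the sector of the unit
ball of half-angle `θ = φ / 2`; by the triangle inequality for angles these sectors are disjoint.
Each sector contains the double cone with apexes `0` and `p` over the `(N-1)`-disc of radius
`sin θ` at height `cos θ`: its slice at height `t` has radius `sin θ * tent (cos θ) t`, so its
volume is `κ_{N-1} sin^{N-1} θ / N` whatever the height of the disc (`κ_n` is the volume of
the unit `n`-ball). Hence the count is at most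
`N κ_N / (κ_{N-1} sin^{N-1} θ)`, and log-convexity of `Γ` gives `N κ_N / κ_{N-1} ≤ √(2πN)`.
-/

open MeasureTheory InnerProductGeometry Set Module Metric
open scoped RealInnerProductSpace NNReal ENNReal Interval

lemma geodesicDist_eq_angle {N : ℕ} {u v : EuclideanSpace ℝ (Fin N)} (hu : ‖u‖ = 1)
    (hv : ‖v‖ = 1) : geodesicDist u v = angle u v := by
  simp [geodesicDist, angle, hu, hv]

section Sector

variable {E F : Type*} [NormedAddCommGroup E] [InnerProductSpace ℝ E]
  [NormedAddCommGroup F] [InnerProductSpace ℝ F]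

lemma InnerProductGeometry.angle_le_iff_edist_le {u v : E} (hu : ‖u‖ = 1) (hv : ‖v‖ = 1)
    {φ : ℝ} (hφ₀ : 0 ≤ φ) (hφπ : φ ≤ π) :
    angle u v ≤ φ ↔ edist u v ≤ ENNReal.ofReal (2 * sin (φ / 2)) := by
  have hsin : 0 ≤ sin (φ / 2) := sin_nonneg_of_nonneg_of_le_pi (by linarith) (by linarith)
  have hchord : ‖u - v‖ ^ 2 = 2 - 2 * cos (angle u v) := by
    rw [← inner_eq_cos_angle_of_norm_eq_one hu hv, norm_sub_sq_real, hu, hv]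
    ring
  have hcos : cos φ = 1 - 2 * sin (φ / 2) ^ 2 := by
    have h := cos_two_mul (φ / 2)
    rw [mul_div_cancel₀ φ two_ne_zero, cos_sq'] at h
    linarith
  rw [edist_dist, ENNReal.ofReal_le_ofReal_iff (by positivity), dist_eq_norm,
    ← strictAntiOn_cos.le_iff_ge ⟨hφ₀, hφπ⟩ ⟨angle_nonneg u v, angle_le_pi u v⟩,
    ← sq_le_sq₀ (norm_nonneg _) (by positivity), hchord, hcos]
  constructor <;> intro h <;> nlinarith

lemma angle_le_of_cos_mul_norm_le_inner {p x : E} (hp : ‖p‖ = 1) (hx : x ≠ 0) {θ : ℝ}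
    (hθ₀ : 0 ≤ θ) (hθπ : θ ≤ π) (h : cos θ * ‖x‖ ≤ ⟪p, x⟫) : angle p x ≤ θ := by
  have hx : 0 < ‖x‖ := norm_pos_iff.2 hx
  rw [angle, hp, one_mul, ← arccos_cos hθ₀ hθπ]
  exact arccos_le_arccos ((le_div_iff₀ hx).2 h)

def sphericalSector (p : E) (θ : ℝ) : Set E := {x | ‖x‖ ≤ 1 ∧ angle p x ≤ θ}

lemma sphericalSector_subset_closedBall (p : E) (θ : ℝ) :
    sphericalSector p θ ⊆ closedBall 0 1 := fun _ hx => by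
  simpa using hx.1

lemma disjoint_sphericalSector {p q : E} {θ : ℝ} (h : 2 * θ < angle p q) :
    Disjoint (sphericalSector p θ) (sphericalSector q θ) :=
  disjoint_left.2 fun x hp hq => by
    linarith [angle_le_angle_add_angle p x q, angle_comm x q, hp.2, hq.2]

lemma measurableSet_sphericalSector [MeasurableSpace E] [OpensMeasurableSpace E] (p : E)
    (θ : ℝ) : MeasurableSet (sphericalSector p θ) := by
  unfold sphericalSector angle
  measurability

lemma LinearIsometryEquiv.preimage_sphericalSector (f : E ≃ₗᵢ[ℝ] F) (p : E) (θ : ℝ) :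
    f ⁻¹' sphericalSector (f p) θ = sphericalSector p θ := by
  ext x
  simp only [sphericalSector, mem_preimage, mem_ofPred_eq, f.norm_map]
  rw [show angle (f p) (f x) = angle p x from f.toLinearIsometry.angle_map p x]

lemma exists_linearIsometryEquiv_apply_eq [FiniteDimensional ℝ E] [FiniteDimensional ℝ F]
    (h : finrank ℝ E = finrank ℝ F) {p : E} {q : F} (hp : ‖p‖ = 1) (hq : ‖q‖ = 1) :
    ∃ f : E ≃ₗᵢ[ℝ] F, f p = q := by
  let g := (stdOrthonormalBasis ℝ E).equiv (stdOrthonormalBasis ℝ F) (finCongr h)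
  refine ⟨g.trans (Submodule.reflection (ℝ ∙ (g p - q))ᗮ), ?_⟩
  exact Submodule.reflection_sub (by rw [g.norm_map, hp, hq])

end Sector

lemma Real.Gamma_add_half_le_sqrt_mul_Gamma {x : ℝ} (hx : 0 < x) :
    Gamma (x + 1 / 2) ≤ √x * Gamma x := by
  have hΓ := (Gamma_pos_of_pos hx).le
  calc Gamma (x + 1 / 2) = Gamma (1 / 2 * x + 1 / 2 * (x + 1)) := by ring_nf
    _ ≤ Gamma x ^ (1 / 2 : ℝ) * Gamma (x + 1) ^ (1 / 2 : ℝ) :=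
      Gamma_mul_add_mul_le_rpow_Gamma_mul_rpow_Gamma hx (by linarith) (by norm_num)
        (by norm_num) (by norm_num)
    _ = √x * Gamma x := by
      rw [Gamma_add_one hx.ne', mul_rpow hx.le hΓ, ← sqrt_eq_rpow, ← sqrt_eq_rpow,
        mul_left_comm, mul_self_sqrt hΓ]

noncomputable def unitBallVolume (n : ℕ) : ℝ := √π ^ n / Gamma (n / 2 + 1)

lemma unitBallVolume_pos (n : ℕ) : 0 < unitBallVolume n :=
  div_pos (by positivity) (Gamma_pos_of_pos (by positivity))

lemma succ_mul_unitBallVolume_succ_le (n : ℕ) :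
    (n + 1) * unitBallVolume (n + 1) ≤ √(2 * π * (n + 1)) * unitBallVolume n := by
  set x : ℝ := (n + 1) / 2 with hx_def
  have hx : 0 < x := by positivity
  have hΓ := Gamma_pos_of_pos hx
  have h2x : √(2 * π * (n + 1)) = 2 * √π * √x := by
    rw [show 2 * π * (n + 1) = 2 ^ 2 * π * x by rw [hx_def]; ring, sqrt_mul (by positivity),
      sqrt_mul (by positivity), sqrt_sq zero_le_two]
  have hsx : 0 < √x := sqrt_pos.2 hx
  calc (n + 1) * unitBallVolume (n + 1) = 2 * √π ^ (n + 1) / Gamma x := by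
        rw [unitBallVolume, show ((n + 1 : ℕ) : ℝ) / 2 + 1 = x + 1 by push_cast; ring,
          Gamma_add_one hx.ne', hx_def]
        field_simp
    _ = √(2 * π * (n + 1)) * (√π ^ n / (√x * Gamma x)) := by
        rw [h2x]
        field_simp
        ring
    _ ≤ √(2 * π * (n + 1)) * unitBallVolume n := by
        rw [unitBallVolume, show (n : ℝ) / 2 + 1 = x + 1 / 2 by rw [hx_def]; ring]
        gcongr
        exact Gamma_add_half_le_sqrt_mul_Gamma hx

section Tent

noncomputable def tent (c t : ℝ) : ℝ := if t ≤ c then t / c else (1 - t) / (1 - c)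

variable {c t : ℝ}

lemma measurable_tent (c : ℝ) : Measurable (tent c) :=
  Measurable.ite measurableSet_Iic (measurable_id.div_const c)
    ((measurable_const.sub measurable_id).div_const _)

lemma tent_nonneg (hc₁ : c < 1) (ht : t ∈ Icc (0 : ℝ) 1) : 0 ≤ tent c t := by
  unfold tent
  split_ifs
  · exact div_nonneg ht.1 (ht.1.trans ‹_›)
  · exact div_nonneg (by linarith [ht.2]) (by linarith)

lemma mul_tent_le (hc₀ : 0 ≤ c) (hc₁ : c < 1) (ht : 0 ≤ t) : c * tent c t ≤ t := by
  unfold tent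
  split_ifs with h
  · rcases hc₀.eq_or_lt with rfl | hc
    · simpa using ht
    · rw [mul_div_cancel₀ t hc.ne']
  · rw [mul_div_assoc', div_le_iff₀ (by linarith)]
    nlinarith

lemma one_sub_mul_tent_le (hc₁ : c < 1) (ht : 0 ≤ t) : (1 - c) * tent c t ≤ 1 - t := by
  unfold tent
  split_ifs with h
  · rcases ht.eq_or_lt with rfl | ht
    · simp
    · rw [mul_div_assoc', div_le_iff₀ (ht.trans_le h)]
      nlinarith
  · rw [mul_div_cancel₀ _ (by linarith)]

lemma tent_pow_eqOn_uIoc_left (hc₀ : 0 ≤ c) (n : ℕ) :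
    EqOn (fun t => tent c t ^ n) (fun t => (t / c) ^ n) (Ι 0 c) :=
  fun t ht => by
    rw [uIoc_of_le hc₀] at ht
    simp [tent, ht.2]

lemma tent_pow_eqOn_uIoc_right (hc₁ : c < 1) (n : ℕ) :
    EqOn (fun t => tent c t ^ n) (fun t => ((1 - t) / (1 - c)) ^ n) (Ι c 1) :=
  fun t ht => by
    rw [uIoc_of_le hc₁.le] at ht
    simp [tent, not_le.2 ht.1]

lemma intervalIntegrable_tent_pow_left (hc₀ : 0 ≤ c) (n : ℕ) :
    IntervalIntegrable (fun t => tent c t ^ n) volume 0 c :=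
  ((continuous_id.div_const c).pow n).intervalIntegrable 0 c
    |>.congr (tent_pow_eqOn_uIoc_left hc₀ n).symm

lemma intervalIntegrable_tent_pow_right (hc₁ : c < 1) (n : ℕ) :
    IntervalIntegrable (fun t => tent c t ^ n) volume c 1 :=
  (((continuous_const.sub continuous_id).div_const _).pow n).intervalIntegrable c 1
    |>.congr (tent_pow_eqOn_uIoc_right hc₁ n).symm

lemma integral_tent_pow (hc₀ : 0 ≤ c) (hc₁ : c < 1) (n : ℕ) :
    ∫ t in (0 : ℝ)..1, tent c t ^ n = 1 / (n + 1) := by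
  have hc₁' : 0 < 1 - c := by linarith
  have int_up : ∫ t in (0 : ℝ)..c, (t / c) ^ n = c / (n + 1) := by
    rcases hc₀.eq_or_lt with rfl | hc
    · simp
    · rw [intervalIntegral.integral_comp_div (fun u => u ^ n) hc.ne', integral_pow]
      simp [hc.ne']
      ring
  have int_down : ∫ t in c..(1 : ℝ), ((1 - t) / (1 - c)) ^ n = (1 - c) / (n + 1) := by
    rw [intervalIntegral.integral_comp_sub_left (fun u => (u / (1 - c)) ^ n),
      intervalIntegral.integral_comp_div (fun u => u ^ n) hc₁'.ne', integral_pow]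
    simp [hc₁'.ne']
    ring
  rw [← intervalIntegral.integral_add_adjacent_intervals
      (intervalIntegrable_tent_pow_left hc₀ n) (intervalIntegrable_tent_pow_right hc₁ n),
    intervalIntegral.integral_congr_ae (ae_of_all _ (tent_pow_eqOn_uIoc_left hc₀ n)),
    intervalIntegral.integral_congr_ae (ae_of_all _ (tent_pow_eqOn_uIoc_right hc₁ n)),
    int_up, int_down]
  ring

lemma lintegral_ofReal_mul_tent_pow (hc₀ : 0 ≤ c) (hc₁ : c < 1) (n : ℕ) {s : ℝ}
    (hs : 0 ≤ s) :
    ∫⁻ t in Ioc 0 1, ENNReal.ofReal (s * tent c t) ^ n = ENNReal.ofReal (s ^ n / (n + 1)) := by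
  have hint : IntegrableOn (fun t => s ^ n * tent c t ^ n) (Ioc 0 1) :=
    (intervalIntegrable_iff_integrableOn_Ioc_of_le zero_le_one).1
      (((intervalIntegrable_tent_pow_left hc₀ n).trans
        (intervalIntegrable_tent_pow_right hc₁ n)).const_mul _)
  have hnonneg : ∀ t ∈ Ioc (0 : ℝ) 1, 0 ≤ s * tent c t := fun t ht =>
    mul_nonneg hs (tent_nonneg hc₁ (Ioc_subset_Icc_self ht))
  calc ∫⁻ t in Ioc 0 1, ENNReal.ofReal (s * tent c t) ^ n
      = ∫⁻ t in Ioc 0 1, ENNReal.ofReal (s ^ n * tent c t ^ n) :=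
        setLIntegral_congr_fun measurableSet_Ioc fun t ht => by
          rw [← ENNReal.ofReal_pow (hnonneg t ht), mul_pow]
    _ = ENNReal.ofReal (∫ t in Ioc 0 1, s ^ n * tent c t ^ n) :=
        (ofReal_integral_eq_lintegral_ofReal hint ((ae_restrict_iff' measurableSet_Ioc).2
          (ae_of_all _ fun t ht => by
            simpa only [Pi.zero_apply, ← mul_pow] using pow_nonneg (hnonneg t ht) n))).symm
    _ = ENNReal.ofReal (s ^ n / (n + 1)) := by
        rw [integral_const_mul, ← intervalIntegral.integral_of_le zero_le_one,
          integral_tent_pow hc₀ hc₁ n, mul_one_div]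

end Tent

section DoubleCone

variable {V : Type*} [NormedAddCommGroup V] [InnerProductSpace ℝ V]

/-- The planar double cone with apexes `(0, 0)` and `(1, 0)` over the point `(c, s)` of the unit
circle lies in the unit disc. -/
lemma sq_add_sq_le_one_of_mul_le_of_one_sub_mul_le {c s t r : ℝ} (hc₀ : 0 ≤ c) (hc₁ : c < 1)
    (hcs : c ^ 2 + s ^ 2 = 1) (ht : t ∈ Ioc 0 1) (hr : 0 ≤ r) (h₁ : c * r ≤ s * t)
    (h₂ : (1 - c) * r ≤ s * (1 - t)) : t ^ 2 + r ^ 2 ≤ 1 := by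
  rcases le_or_gt t c with htc | htc
  · have hc : 0 < c := ht.1.trans_le htc
    nlinarith [mul_self_le_mul_self (mul_nonneg hc₀ hr) h₁, mul_self_le_mul_self ht.1.le htc,
      mul_pos hc hc]
  · have h : (1 - c) * ((1 - c) * r ^ 2) ≤ (1 - c) * ((1 + c) * (1 - t) ^ 2) := by
      nlinarith [mul_self_le_mul_self (mul_nonneg (by linarith : 0 ≤ 1 - c) hr) h₂]
    nlinarith [le_of_mul_le_mul_left h (by linarith), ht.2]

lemma toLp_mem_sphericalSector_of_norm_le_mul_tent {θ : ℝ} (hθ₀ : 0 < θ) (hθ : θ ≤ π / 2)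
    {t : ℝ} {y : V} (ht : t ∈ Ioc 0 1) (hy : ‖y‖ ≤ sin θ * tent (cos θ) t) :
    WithLp.toLp 2 (t, y) ∈ sphericalSector (WithLp.toLp 2 ((1 : ℝ), (0 : V))) θ := by
  set c := cos θ
  set s := sin θ
  have hc₀ : 0 ≤ c := cos_nonneg_of_mem_Icc ⟨by linarith [pi_pos], hθ⟩
  have hs : 0 < s := sin_pos_of_pos_of_lt_pi hθ₀ (by linarith [pi_pos])
  have hcs : c ^ 2 + s ^ 2 = 1 := cos_sq_add_sin_sq θ
  have hc₁ : c < 1 := by nlinarith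
  set r := ‖y‖
  have hr : 0 ≤ r := norm_nonneg y
  have h₁ : c * r ≤ s * t := calc
    c * r ≤ c * (s * tent c t) := mul_le_mul_of_nonneg_left hy hc₀
    _ = s * (c * tent c t) := by ring
    _ ≤ s * t := mul_le_mul_of_nonneg_left (mul_tent_le hc₀ hc₁ ht.1.le) hs.le
  have h₂ : (1 - c) * r ≤ s * (1 - t) := calc
    (1 - c) * r ≤ (1 - c) * (s * tent c t) := mul_le_mul_of_nonneg_left hy (by linarith)
    _ = s * ((1 - c) * tent c t) := by ring
    _ ≤ s * (1 - t) := mul_le_mul_of_nonneg_left (one_sub_mul_tent_le hc₁ ht.1.le) hs.le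
  have hnorm : ‖WithLp.toLp 2 (t, y)‖ ^ 2 = t ^ 2 + r ^ 2 := by
    simp [WithLp.prod_norm_sq_eq_of_L2, r]
  have hinner : ⟪WithLp.toLp 2 ((1 : ℝ), (0 : V)), WithLp.toLp 2 (t, y)⟫ = t := by
    simp [WithLp.prod_inner_apply]
  refine ⟨?_, angle_le_of_cos_mul_norm_le_inner (by simp) ?_ hθ₀.le (by linarith) ?_⟩
  · rw [← pow_le_one_iff_of_nonneg (norm_nonneg _) two_ne_zero, hnorm]
    exact sq_add_sq_le_one_of_mul_le_of_one_sub_mul_le hc₀ hc₁ hcs ht hr h₁ h₂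
  · intro h
    rw [h, norm_zero] at hnorm
    nlinarith [ht.1]
  · rw [hinner, ← pow_le_pow_iff_left₀ (by positivity) ht.1.le two_ne_zero, mul_pow, hnorm]
    nlinarith [mul_self_le_mul_self (mul_nonneg hc₀ hr) h₁]

variable [FiniteDimensional ℝ V] [MeasurableSpace V] [BorelSpace V] [Nontrivial V]

lemma volume_setOf_fst_mem_and_norm_snd_le {s : Set ℝ} (hs : MeasurableSet s) {f : ℝ → ℝ}
    (hf : Measurable f) :
    volume {q : ℝ × V | q.1 ∈ s ∧ ‖q.2‖ ≤ f q.1} =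
      ∫⁻ t in s, ENNReal.ofReal (f t) ^ finrank ℝ V *
        ENNReal.ofReal (unitBallVolume (finrank ℝ V)) := by
  have hmeas : MeasurableSet {q : ℝ × V | q.1 ∈ s ∧ ‖q.2‖ ≤ f q.1} :=
    (measurable_fst hs).inter
      (measurableSet_le (measurable_norm.comp measurable_snd) (hf.comp measurable_fst))
  rw [Measure.volume_eq_prod, Measure.prod_apply hmeas, ← lintegral_indicator hs]
  congr 1 with t
  by_cases ht : t ∈ s
  · rw [indicator_of_mem ht, unitBallVolume, ← InnerProductSpace.volume_closedBall (0 : V)]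
    congr 1
    ext y
    simp [ht]
  · simp [ht]

lemma le_volume_sphericalSector_toLp {θ : ℝ} (hθ₀ : 0 < θ) (hθ : θ ≤ π / 2) :
    ENNReal.ofReal (sin θ ^ finrank ℝ V / (finrank ℝ V + 1) * unitBallVolume (finrank ℝ V)) ≤
      volume (sphericalSector (WithLp.toLp 2 ((1 : ℝ), (0 : V))) θ) := by
  have hc₀ : 0 ≤ cos θ := cos_nonneg_of_mem_Icc ⟨by linarith [pi_pos], hθ⟩
  have hs : 0 < sin θ := sin_pos_of_pos_of_lt_pi hθ₀ (by linarith [pi_pos])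
  have hc₁ : cos θ < 1 := by nlinarith [cos_sq_add_sin_sq θ]
  have hf : Measurable fun t => sin θ * tent (cos θ) t := (measurable_tent _).const_mul _
  let W := {q : ℝ × V | q.1 ∈ Ioc 0 1 ∧ ‖q.2‖ ≤ sin θ * tent (cos θ) q.1}
  calc ENNReal.ofReal (sin θ ^ finrank ℝ V / (finrank ℝ V + 1) * unitBallVolume (finrank ℝ V))
      = volume W := by
        rw [volume_setOf_fst_mem_and_norm_snd_le measurableSet_Ioc hf,
          lintegral_mul_const _ (hf.ennreal_ofReal.pow_const _),
          lintegral_ofReal_mul_tent_pow hc₀ hc₁ _ hs.le, ENNReal.ofReal_mul (by positivity)]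
    _ = volume ((MeasurableEquiv.toLp 2 (ℝ × V)).symm ⁻¹' W) :=
        ((WithLp.volume_preserving_symm_measurableEquiv_toLp_prod ℝ V).measure_preimage_equiv
          W).symm
    _ ≤ volume (sphericalSector (WithLp.toLp 2 ((1 : ℝ), (0 : V))) θ) :=
        measure_mono fun x hx => toLp_mem_sphericalSector_of_norm_le_mul_tent hθ₀ hθ hx.1 hx.2

end DoubleCone

section Packing

variable {E : Type*} [NormedAddCommGroup E] [InnerProductSpace ℝ E] [FiniteDimensional ℝ E]
  [MeasurableSpace E] [BorelSpace E] {n : ℕ} {θ : ℝ}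

lemma le_volume_sphericalSector (hn : 0 < n) (hE : finrank ℝ E = n + 1) {p : E} (hp : ‖p‖ = 1)
    (hθ₀ : 0 < θ) (hθ : θ ≤ π / 2) :
    ENNReal.ofReal (sin θ ^ n / (n + 1) * unitBallVolume n) ≤ volume (sphericalSector p θ) := by
  have : Nonempty (Fin n) := ⟨⟨0, hn⟩⟩
  let V := EuclideanSpace ℝ (Fin n)
  have hV : finrank ℝ V = n := finrank_euclideanSpace_fin
  have hM : finrank ℝ E = finrank ℝ (WithLp 2 (ℝ × V)) := by
    rw [(WithLp.linearEquiv 2 ℝ (ℝ × V)).finrank_eq, finrank_prod, finrank_self, hV, hE,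
      add_comm]
  obtain ⟨f, hf⟩ := exists_linearIsometryEquiv_apply_eq hM hp
    (q := WithLp.toLp 2 ((1 : ℝ), (0 : V))) (by simp)
  rw [← f.preimage_sphericalSector, f.measurePreserving.measure_preimage
    (measurableSet_sphericalSector _ θ).nullMeasurableSet, hf]
  simpa only [hV] using le_volume_sphericalSector_toLp (V := V) hθ₀ hθ

lemma card_mul_le_unitBallVolume (hn : 0 < n) (hE : finrank ℝ E = n + 1) (hθ₀ : 0 < θ)
    (hθ : θ ≤ π / 2) {P : Finset E} (hP : ∀ p ∈ P, ‖p‖ = 1)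
    (hsep : (P : Set E).Pairwise fun p q => 2 * θ < angle p q) :
    P.card * (sin θ ^ n / (n + 1) * unitBallVolume n) ≤ unitBallVolume (n + 1) := by
  have : Nontrivial E := Module.nontrivial_of_finrank_pos (R := ℝ) (by omega)
  have hvol : (P.card : ℝ≥0∞) * ENNReal.ofReal (sin θ ^ n / (n + 1) * unitBallVolume n) ≤
      ENNReal.ofReal (unitBallVolume (n + 1)) := calc
    _ = ∑ p ∈ P, ENNReal.ofReal (sin θ ^ n / (n + 1) * unitBallVolume n) := by simp
    _ ≤ ∑ p ∈ P, volume (sphericalSector p θ) :=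
        Finset.sum_le_sum fun p hp => le_volume_sphericalSector hn hE (hP p hp) hθ₀ hθ
    _ = volume (⋃ p ∈ P, sphericalSector p θ) :=
        (measure_biUnion_finset (fun p hp q hq hpq => disjoint_sphericalSector (hsep hp hq hpq))
          fun p _ => measurableSet_sphericalSector p θ).symm
    _ ≤ volume (closedBall (0 : E) 1) :=
        measure_mono (iUnion₂_subset fun p _ => sphericalSector_subset_closedBall p θ)
    _ = ENNReal.ofReal (unitBallVolume (n + 1)) := by
        rw [InnerProductSpace.volume_closedBall, hE, unitBallVolume]
        simp
  rwa [← ENNReal.ofReal_natCast, ← ENNReal.ofReal_mul (Nat.cast_nonneg _),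
    ENNReal.ofReal_le_ofReal_iff (unitBallVolume_pos _).le] at hvol

lemma card_le_of_pairwise_lt_angle (hn : 0 < n) (hE : finrank ℝ E = n + 1) (hθ₀ : 0 < θ)
    (hθ : θ ≤ π / 2) {P : Finset E} (hP : ∀ p ∈ P, ‖p‖ = 1)
    (hsep : (P : Set E).Pairwise fun p q => 2 * θ < angle p q) :
    (P.card : ℝ) ≤ √(2 * π * (n + 1)) * (1 / sin θ) ^ n := by
  have hs : 0 < sin θ := sin_pos_of_pos_of_lt_pi hθ₀ (by linarith [pi_pos])
  have hκ := unitBallVolume_pos n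
  have h := (mul_le_mul_of_nonneg_left (card_mul_le_unitBallVolume hn hE hθ₀ hθ hP hsep)
    (by positivity : (0 : ℝ) ≤ n + 1)).trans (succ_mul_unitBallVolume_succ_le n)
  have h' : P.card * sin θ ^ n * unitBallVolume n ≤ √(2 * π * (n + 1)) * unitBallVolume n := by
    refine le_of_eq_of_le ?_ h
    have : (n : ℝ) + 1 ≠ 0 := by positivity
    field_simp
  rw [one_div_pow, mul_one_div, le_div_iff₀ (by positivity)]
  exact le_of_mul_le_mul_right h' hκ

end Packing

lemma packingNumber_le_of_forall_finset {X : Type*} [PseudoEMetricSpace X] {ε : ℝ≥0}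
    {A : Set X} {M : ℕ}
    (h : ∀ P : Finset X, (P : Set X) ⊆ A → IsSeparated ε (P : Set X) → P.card ≤ M) :
    packingNumber ε A ≤ M := by
  refine iSup_le fun C => iSup_le fun hCA => iSup_le fun hC => ?_
  by_contra! hlt
  obtain ⟨D, hDC, hD⟩ := exists_subset_encard_eq (Order.add_one_le_of_lt hlt)
  have hDfin : D.Finite := finite_of_encard_eq_coe (k := M + 1) (by simpa using hD)
  have hcard := h hDfin.toFinset (by simpa using hDC.trans hCA) (by simpa using hC.subset hDC)
  rw [hDfin.encard_eq_coe_toFinset_card] at hD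
  norm_cast at hD
  omega

lemma card_le_of_isSeparated_sphere {E : Type*} [NormedAddCommGroup E] [InnerProductSpace ℝ E]
    [FiniteDimensional ℝ E] [MeasurableSpace E] [BorelSpace E] {n : ℕ} (hn : 0 < n)
    (hE : finrank ℝ E = n + 1) {φ : ℝ} (hφ₀ : 0 < φ) (hφπ : φ ≤ π) {P : Finset E}
    (hP : (P : Set E) ⊆ sphere 0 1)
    (hsep : IsSeparated (2 * sin (φ / 2)).toNNReal (P : Set E)) :
    (P.card : ℝ) ≤ √(2 * π * (n + 1)) * (1 / sin (φ / 2)) ^ n := by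
  have hunit : ∀ p ∈ P, ‖p‖ = 1 := fun p hp => by simpa using hP hp
  refine card_le_of_pairwise_lt_angle hn hE (by positivity) (by linarith) hunit
    fun p hp q hq hpq => ?_
  have h : ENNReal.ofReal (2 * sin (φ / 2)) < edist p q := hsep hp hq hpq
  show 2 * (φ / 2) < angle p q
  rwa [mul_div_cancel₀ φ two_ne_zero, ← not_le,
    angle_le_iff_edist_le (hunit p hp) (hunit q hq) hφ₀.le hφπ, not_le]

theorem exists_dense_set_with_card_bound (N : ℕ) (hN : 2 ≤ N) (φ : ℝ) (hφ : 0 < φ)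
    (hφπ : φ ≤ π) :
    ∃ P : Finset (EuclideanSpace ℝ (Fin N)),
      (∀ p ∈ P, ‖p‖ = 1) ∧
      (∀ v : EuclideanSpace ℝ (Fin N), ‖v‖ = 1 → ∃ p ∈ P, geodesicDist v p ≤ φ) ∧
      (P.card : ℝ) ≤ Real.sqrt (2 * π * N) * (1 / Real.sin (φ / 2)) ^ (N - 1) := by
  obtain ⟨n, rfl⟩ : ∃ n, N = n + 1 := ⟨N - 1, by omega⟩
  set ε := (2 * sin (φ / 2)).toNNReal
  set S := sphere (0 : EuclideanSpace ℝ (Fin (n + 1))) 1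
  have hbound : ∀ P : Finset (EuclideanSpace ℝ (Fin (n + 1))), ↑P ⊆ S →
      IsSeparated ε (P : Set (EuclideanSpace ℝ (Fin (n + 1)))) →
      (P.card : ℝ) ≤ √(2 * π * (n + 1)) * (1 / sin (φ / 2)) ^ n :=
    fun P hPS hP => card_le_of_isSeparated_sphere (by omega) finrank_euclideanSpace_fin hφ hφπ
      hPS hP
  have hfin : packingNumber ε S ≠ ⊤ := ne_top_of_le_ne_top (ENat.natCast_ne_top _)
    (packingNumber_le_of_forall_finset fun P hPS hP => Nat.le_floor (hbound P hPS hP))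
  have hC : (maximalSeparatedSet ε S).Finite :=
    encard_ne_top_iff.1 (by rwa [encard_maximalSeparatedSet hfin])
  have hCS : ∀ p ∈ hC.toFinset, ‖p‖ = 1 := fun p hp => by
    simpa [S] using maximalSeparatedSet_subset (hC.mem_toFinset.1 hp)
  refine ⟨hC.toFinset, hCS, fun v hv => ?_, ?_⟩
  · obtain ⟨p, hp, hvp⟩ := isCover_maximalSeparatedSet hfin (by simpa [S] using hv)
    refine ⟨p, hC.mem_toFinset.2 hp, ?_⟩
    have hp₁ := hCS p (hC.mem_toFinset.2 hp)
    rw [geodesicDist_eq_angle hv hp₁]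
    exact (angle_le_iff_edist_le hv hp₁ hφ.le hφπ).2 hvp
  · simpa using hbound hC.toFinset (by simpa using maximalSeparatedSet_subset)
      (by simpa using isSeparated_maximalSeparatedSet)
end

section
/- Let x, p, q be points in the Euclidean plane ℝ² with x ≠ p, x ≠ q, p ≠ q. Let l, d, α be real numbers with 0 < l, l ≤ dist(p,q), dist(x,q) ≤ d, and 0 < α ≤ π/2, and suppose the angle of the triangle at p satisfies α ≤ ∠xpq ≤ π − α. Then the angle at x (the angular span of the segment pq as seen from x) satisfies sin(∠pxq) ≥ (l/d)·sin(α). -/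
open Real EuclideanGeometry

theorem Real.sin_le_sin_of_le_of_le_pi_sub {α θ : ℝ} (hα : -(π / 2) ≤ α) (hαθ : α ≤ θ)
    (hθ : θ ≤ π - α) : sin α ≤ sin θ := by
  rcases le_or_gt θ (π / 2) with hθπ | hθπ
  · exact sin_le_sin_of_le_of_le_pi_div_two hα hθπ hαθ
  · rw [← sin_pi_sub θ]
    exact sin_le_sin_of_le_of_le_pi_div_two hα (by linarith) (by linarith)

theorem EuclideanGeometry.sin_angle_eq_sin_angle_mul_dist_div_dist
    {V P : Type*} [NormedAddCommGroup V] [InnerProductSpace ℝ V] [MetricSpace P]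
    [NormedAddTorsor V P] {x p q : P} (hxq : x ≠ q) :
    sin (∠ p x q) = sin (∠ x p q) * (dist p q / dist x q) := by
  have hsine := law_sin p x q
  rw [angle_comm q p x, dist_comm q p] at hsine
  field_simp [dist_ne_zero.mpr hxq]
  exact hsine

theorem angular_span_law_of_sines_general (x p q : EuclideanSpace ℝ (Fin 2))
    (hxq : x ≠ q)
    (l d α : ℝ) (hlpq : l ≤ dist p q) (hxqd : dist x q ≤ d)
    (hα : 0 < α)
    (hangle1 : α ≤ ∠ x p q) (hangle2 : ∠ x p q ≤ π - α) :
    Real.sin (∠ p x q) ≥ (l / d) * Real.sin α := by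
  have hxq_pos : 0 < dist x q := dist_pos.mpr hxq
  have hsin_α : 0 ≤ sin α := sin_nonneg_of_nonneg_of_le_pi hα.le (by linarith)
  rw [sin_angle_eq_sin_angle_mul_dist_div_dist hxq]
  calc (l / d) * sin α ≤ (dist p q / dist x q) * sin α :=
        mul_le_mul_of_nonneg_right (div_le_div₀ dist_nonneg hlpq hxq_pos hxqd) hsin_α
    _ ≤ (dist p q / dist x q) * sin (∠ x p q) :=
        mul_le_mul_of_nonneg_left
          (sin_le_sin_of_le_of_le_pi_sub (by linarith [pi_pos]) hangle1 hangle2) (by positivity)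
    _ = sin (∠ x p q) * (dist p q / dist x q) := mul_comm _ _

theorem angular_span_law_of_sines (x p q : EuclideanSpace ℝ (Fin 2))
    (hxp : x ≠ p) (hxq : x ≠ q) (hpq : p ≠ q)
    (l d α : ℝ) (hl : 0 < l) (hlpq : l ≤ dist p q) (hxqd : dist x q ≤ d)
    (hα : 0 < α) (hαπ : α ≤ π / 2)
    (hangle1 : α ≤ ∠ x p q) (hangle2 : ∠ x p q ≤ π - α) :
    Real.sin (∠ p x q) ≥ (l / d) * Real.sin α :=
  angular_span_law_of_sines_general x p q hxq l d α hlpq hxqd hα hangle1 hangle2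
end
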